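/- For α ∈ [-1/2,∞)^d, x ∈ (0,∞)^d and t > 0, let V_t^{α,+}(x) = Πⱼ V_t^{α_j,+}(x_j) where V_t^{α_j,+}(x_j) is the w_{α_j}⁺-measure of (x_j−t, x_j+t) ∩ (0,∞). Then V_t^{α,+}(x) ≃ t^d · Πⱼ₌₁^d (x_j+t)^{2α_j+1}, uniformly in x and t. -/

import Mathlib

open MeasureTheory Real Set

/-- `V_t^{α_j,+}(x_j)`: the `w_{α_j}⁺`-measure of `(x_j−t, x_j+t) ∩ (0,∞)`. -/
noncomputable def V1 (α t x : ℝ) : ℝ :=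
  ∫ s in Ioo (max (x - t) 0) (x + t), s ^ (2*α + 1)

/-! Since `2α + 1 ≥ 0`, the density `s ^ (2α + 1)` is increasing on `[0, ∞)`. Hence `V1 α t x` is
at most `(x + t) ^ (2α + 1)` times the length `≤ 2t` of the interval, and at least
`((x + t) / 2) ^ (2α + 1)` times the length `≥ t / 2` of its part to the right of
`max (x - t) ((x + t) / 2)`. Multiplying the `d` one-dimensional estimates gives the theorem. -/

section RpowIntegral

variable {p a b c : ℝ}

lemma integrableOn_rpow_Ioo (hp : 0 ≤ p) : IntegrableOn (fun s : ℝ => s ^ p) (Ioo a b) :=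
  (continuous_rpow_const hp).continuousOn.integrableOn_Icc.mono_set Ioo_subset_Icc_self

lemma setIntegral_rpow_Ioo_le (hp : 0 ≤ p) (ha : 0 ≤ a) (hab : a ≤ b) :
    ∫ s in Ioo a b, s ^ p ≤ b ^ p * (b - a) := by
  calc ∫ s in Ioo a b, s ^ p ≤ ∫ _ in Ioo a b, b ^ p :=
        setIntegral_mono_on (integrableOn_rpow_Ioo hp)
          (integrableOn_const measure_Ioo_lt_top.ne) measurableSet_Ioo
          fun s hs => rpow_le_rpow (ha.trans hs.1.le) hs.2.le hp
    _ = b ^ p * (b - a) := by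
        rw [setIntegral_const, volume_real_Ioo_of_le hab, smul_eq_mul, mul_comm]

lemma mul_le_setIntegral_rpow_Ioo (hp : 0 ≤ p) (ha : 0 ≤ a) (hac : a ≤ c) (hcb : c ≤ b) :
    c ^ p * (b - c) ≤ ∫ s in Ioo a b, s ^ p := by
  have hsub : Ioo c b ⊆ Ioo a b := Ioo_subset_Ioo_left hac
  calc c ^ p * (b - c) = ∫ _ in Ioo c b, c ^ p := by
        rw [setIntegral_const, volume_real_Ioo_of_le hcb, smul_eq_mul, mul_comm]
    _ ≤ ∫ s in Ioo c b, s ^ p :=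
        setIntegral_mono_on (integrableOn_const measure_Ioo_lt_top.ne)
          (integrableOn_rpow_Ioo hp) measurableSet_Ioo
          fun s hs => rpow_le_rpow (ha.trans hac) hs.1.le hp
    _ ≤ ∫ s in Ioo a b, s ^ p := by
        refine setIntegral_mono_set (integrableOn_rpow_Ioo hp) ?_ hsub.eventuallyLE
        filter_upwards [ae_restrict_mem measurableSet_Ioo] with s hs
        exact rpow_nonneg (ha.trans hs.1.le) p

end RpowIntegral

section V1

variable {α t x : ℝ}

lemma V1_le (hα : -(1/2 : ℝ) ≤ α) (hx : 0 ≤ x) (ht : 0 ≤ t) :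
    V1 α t x ≤ 2 * (t * (x + t) ^ (2 * α + 1)) := by
  have hp : 0 ≤ 2 * α + 1 := by linarith
  have hab : max (x - t) 0 ≤ x + t := max_le (by linarith) (by linarith)
  have hlen : x + t - max (x - t) 0 ≤ 2 * t := by linarith [le_max_left (x - t) 0]
  calc V1 α t x ≤ (x + t) ^ (2 * α + 1) * (x + t - max (x - t) 0) :=
        setIntegral_rpow_Ioo_le hp (le_max_right _ _) hab
    _ ≤ (x + t) ^ (2 * α + 1) * (2 * t) := by gcongr
    _ = 2 * (t * (x + t) ^ (2 * α + 1)) := by ring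

lemma le_V1 (hα : -(1/2 : ℝ) ≤ α) (hx : 0 ≤ x) (ht : 0 ≤ t) :
    (2 ^ (2 * α + 2))⁻¹ * (t * (x + t) ^ (2 * α + 1)) ≤ V1 α t x := by
  have hp : 0 ≤ 2 * α + 1 := by linarith
  set c := max (x - t) ((x + t) / 2)
  have hac : max (x - t) 0 ≤ c := max_le_max le_rfl (by linarith)
  have hcb : c ≤ x + t := max_le (by linarith) (by linarith)
  have hlen : t / 2 ≤ x + t - c := by
    have : c ≤ x + t / 2 := max_le (by linarith) (by linarith)
    linarith
  calc (2 ^ (2 * α + 2))⁻¹ * (t * (x + t) ^ (2 * α + 1))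
        = ((x + t) / 2) ^ (2 * α + 1) * (t / 2) := by
          rw [div_rpow (by linarith) zero_le_two, show 2 * α + 2 = 2 * α + 1 + 1 by ring,
            rpow_add_one two_ne_zero]
          field_simp
    _ ≤ c ^ (2 * α + 1) * (x + t - c) := by
        gcongr
        exact le_max_right _ _
    _ ≤ V1 α t x := mul_le_setIntegral_rpow_Ioo hp (le_max_right _ _) hac hcb

end V1

lemma Finset.prod_comparable {ι : Type*} (s : Finset ι) {f g c C : ι → ℝ}
    (hf : ∀ i ∈ s, 0 ≤ f i) (hc : ∀ i ∈ s, 0 ≤ c i)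
    (hlow : ∀ i ∈ s, c i * f i ≤ g i) (hup : ∀ i ∈ s, g i ≤ C i * f i) :
    (∏ i ∈ s, c i) * ∏ i ∈ s, f i ≤ ∏ i ∈ s, g i ∧
      ∏ i ∈ s, g i ≤ (∏ i ∈ s, C i) * ∏ i ∈ s, f i := by
  rw [← Finset.prod_mul_distrib, ← Finset.prod_mul_distrib]
  exact ⟨Finset.prod_le_prod (fun i hi => mul_nonneg (hc i hi) (hf i hi)) hlow,
    Finset.prod_le_prod (fun i hi => (mul_nonneg (hc i hi) (hf i hi)).trans (hlow i hi)) hup⟩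

theorem stmt9 {d : ℕ} (α : Fin d → ℝ) (hα : ∀ j, -(1/2 : ℝ) ≤ α j) :
    ∃ c₁ c₂ : ℝ, 0 < c₁ ∧ 0 < c₂ ∧
      ∀ (x : Fin d → ℝ) (t : ℝ), (∀ j, 0 < x j) → 0 < t →
        c₁ * (t ^ d * ∏ j, (x j + t) ^ (2 * α j + 1)) ≤ ∏ j, V1 (α j) t (x j) ∧
        ∏ j, V1 (α j) t (x j) ≤ c₂ * (t ^ d * ∏ j, (x j + t) ^ (2 * α j + 1)) := by
  refine ⟨∏ j, (2 ^ (2 * α j + 2))⁻¹, ∏ _j : Fin d, 2,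
    Finset.prod_pos fun j _ => by positivity, by positivity, fun x t hx ht => ?_⟩
  have hprod : t ^ d * ∏ j, (x j + t) ^ (2 * α j + 1) = ∏ j, t * (x j + t) ^ (2 * α j + 1) := by
    rw [Finset.prod_mul_distrib, Fin.prod_const]
  rw [hprod]
  exact Finset.univ.prod_comparable (fun j _ => by have := hx j; positivity)
    (fun j _ => by positivity) (fun j _ => le_V1 (hα j) (hx j).le ht.le)
    (fun j _ => V1_le (hα j) (hx j).le ht.le)
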